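/- Let N be a positive integer and A an N-complementable flat layout. If B is a flat layout such that (1) B is an N-complement of A, (2) B is coalesced, and (3) B is sorted, then B = comp(A,N). -/

import Mathlib

/-- A flat layout, represented as its list of modes `(sᵢ, dᵢ)`:
the first component of each mode is a shape entry, the second a stride entry. -/
abbrev FlatLayout := List (ℕ × ℕ)

namespace FlatLayout

/-- Validity of a flat layout: every shape entry is a positive integer. -/
def Valid (L : FlatLayout) : Prop := ∀ p ∈ L, 0 < p.1

/-- The size of a flat layout: the product of its shape entries. -/
def size (L : FlatLayout) : ℕ := (L.map Prod.fst).prod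

/-- The cosize of a flat layout: `1 + Σ (sᵢ - 1) * dᵢ`. -/
def cosize (L : FlatLayout) : ℕ := 1 + (L.map fun p => (p.1 - 1) * p.2).sum

/-- The rank of a flat layout: its number of modes. -/
def rank (L : FlatLayout) : ℕ := L.length

/-- The layout function `Φ_L`: `Φ_L(x) = Σ xᵢ·dᵢ` where
`xᵢ = ⌊x / (s₁⋯sᵢ₋₁)⌋ mod sᵢ`. -/
def phi : FlatLayout → ℕ → ℕ
  | [], _ => 0
  | (s, d) :: rest, x => x % s * d + phi rest (x / s)

/-- `squeeze L` deletes every mode whose shape entry equals `1`. -/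
def squeeze (L : FlatLayout) : FlatLayout := L.filter fun p => p.1 != 1

/-- `filterZeros L` deletes every mode whose stride entry equals `0`. -/
def filterZeros (L : FlatLayout) : FlatLayout := L.filter fun p => p.2 != 0

/-- The ordering on modes: `(s,d) ⪯ (s',d')` iff `d < d'`, or `d = d'` and `s ≤ s'`. -/
def ModeLE (p q : ℕ × ℕ) : Prop := p.2 < q.2 ∨ (p.2 = q.2 ∧ p.1 ≤ q.1)

instance : DecidableRel ModeLE := fun p q => by unfold ModeLE; infer_instance

/-- A flat layout is sorted if its consecutive modes are `⪯`-increasing. -/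
def Sorted (L : FlatLayout) : Prop := L.Chain' ModeLE

/-- `sortL L` stably sorts the modes of `L` with respect to `⪯`. -/
def sortL (L : FlatLayout) : FlatLayout := L.mergeSort fun p q => decide (ModeLE p q)

/-- A flat layout is coalesced if no shape entry equals `1` and
for consecutive modes, `sᵢ·dᵢ ≠ dᵢ₊₁`. -/
def Coalesced (L : FlatLayout) : Prop :=
  (∀ p ∈ L, p.1 ≠ 1) ∧ L.Chain' fun p q => p.1 * p.2 ≠ q.2

/-- Combine adjacent modes `(s,d), (s',d')` with `d' = s·d` into `(s·s', d)`, repeatedly. -/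
def coalAux : List (ℕ × ℕ) → List (ℕ × ℕ)
  | [] => []
  | p :: rest =>
    match coalAux rest with
    | [] => [p]
    | q :: rest' =>
        if p.1 * p.2 = q.2 then (p.1 * q.1, p.2) :: rest' else p :: q :: rest'

/-- Coalesce of a flat layout: squeeze, then repeatedly combine adjacent modes
`(s,d), (s',d')` with `d' = s·d` into `(s·s', d)`. -/
def coal (L : FlatLayout) : FlatLayout := coalAux (squeeze L)

/-- Compactness: the layout function takes values in `{0, …, cosize L - 1}` and induces a
bijection `{0, …, size L - 1} → {0, …, cosize L - 1}`. -/
def Compact (L : FlatLayout) : Prop :=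
  Set.BijOn (phi L) {x | x < size L} {y | y < cosize L}

/-- `B` is a complement of `A` (written `A ⊥ B`) if the concatenation `A ⋆ B` is compact. -/
def Perp (A B : FlatLayout) : Prop := Compact (A ++ B)

/-- `A` is complementable if, writing `sort(squeeze A) = (s₁,…,sₘ):(d₁,…,dₘ)`,
`sᵢ·dᵢ` divides `dᵢ₊₁` for all `1 ≤ i < m`. -/
def Complementable (A : FlatLayout) : Prop :=
  (sortL (squeeze A)).Chain' fun p q => p.1 * p.2 ∣ q.2

/-- `B` is an `N`-complement of `A` if `B` is a complement of `A`
and `size A * size B = N`. -/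
def IsNComplement (A B : FlatLayout) (N : ℕ) : Prop :=
  Perp A B ∧ size A * size B = N

/-- `A` is `N`-complementable if, writing `sort(squeeze A) = (s₁,…,sₘ):(d₁,…,dₘ)`,
`sᵢ·dᵢ ∣ dᵢ₊₁` for all `1 ≤ i < m`, and `sₘ·dₘ ∣ N`. -/
def NComplementable (A : FlatLayout) (N : ℕ) : Prop :=
  ((sortL (squeeze A)).Chain' fun p q => p.1 * p.2 ∣ q.2) ∧
  ∀ p, (sortL (squeeze A)).getLast? = some p → p.1 * p.2 ∣ N

/-- Given `l = [(s₁,d₁),…,(sₘ,dₘ)]`, the layout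
`C = (d₁, d₂/(s₁d₁), …, dₘ/(sₘ₋₁dₘ₋₁)) : (1, s₁d₁, …, sₘ₋₁dₘ₋₁)`. -/
def compModes (l : List (ℕ × ℕ)) : List (ℕ × ℕ) :=
  match l with
  | [] => []
  | (_, d₁) :: t =>
      (d₁, 1) :: (l.zip t).map fun pq => (pq.2.2 / (pq.1.1 * pq.1.2), pq.1.1 * pq.1.2)

/-- The complement `comp A = coal C` of a complementable flat layout `A`. -/
def comp (A : FlatLayout) : FlatLayout := coal (compModes (sortL (squeeze A)))

/-- Given `l = [(s₁,d₁),…,(sₘ,dₘ)]` and `N`, the layout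
`C = (d₁, d₂/(s₁d₁), …, dₘ/(sₘ₋₁dₘ₋₁), N/(sₘdₘ)) : (1, s₁d₁, …, sₘ₋₁dₘ₋₁, sₘdₘ)`. -/
def compNModes (l : List (ℕ × ℕ)) (N : ℕ) : List (ℕ × ℕ) :=
  match l.getLast? with
  | none => [(N, 1)]
  | some (sm, dm) => compModes l ++ [(N / (sm * dm), sm * dm)]

/-- The `N`-complement `comp(A, N) = coal C` of an `N`-complementable flat layout `A`. -/
def compN (A : FlatLayout) (N : ℕ) : FlatLayout :=
  coal (compNModes (sortL (squeeze A)) N)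

/-- `L` is tractable if, writing `sort L = (s₁,…,sₘ):(d₁,…,dₘ)`, for every `1 ≤ i < m`
either `dᵢ = 0` or `sᵢ·dᵢ` divides `dᵢ₊₁`. -/
def Tractable (L : FlatLayout) : Prop :=
  (sortL L).Chain' fun p q => p.2 = 0 ∨ p.1 * p.2 ∣ q.2

end FlatLayout

/-! After squeezing and sorting, `A ⋆ B` is still compact and all its shapes are at least 2. Such
a layout has telescoping strides `1, s₁, s₁s₂, …`: a stride below the product of the earlier shapes
repeats an offset, one above it misses an offset. The sorted modes of `A` and of `B` therefore
interleave into one telescoping chain. In each gap that the strides of `A` leave in this chain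
(below the first, between two consecutive ones, and above the last up to `N`), `B` has at most one
mode, since two adjacent modes of `B` in the chain would coalesce. That mode is then forced, and it
is missing exactly when the gap is trivial: this is `comp(A, N)`. -/

open scoped Pointwise

theorem List.head_cases_of_perm_append {α : Type*} {r : α → α → Prop} [Std.Antisymm r]
    {x : α} {M A B : List α} (hM : (x :: M).Pairwise r) (hA : A.Pairwise r)
    (hB : B.Pairwise r) (h : (x :: M).Perm (A ++ B)) :
    (∃ A', A = x :: A' ∧ M.Perm (A' ++ B)) ∨ (∃ B', B = x :: B' ∧ M.Perm (A ++ B')) := by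
  have head_eq {a : α} {L : List α} (hL : (a :: L).Pairwise r) (hxL : x ∈ a :: L)
      (haM : a ∈ x :: M) : a = x := by
    rcases List.mem_cons.mp hxL with rfl | hxL; · rfl
    rcases List.mem_cons.mp haM with rfl | haM; · rfl
    exact Std.Antisymm.antisymm _ _ (List.rel_of_pairwise_cons hL hxL)
      (List.rel_of_pairwise_cons hM haM)
  rcases List.mem_append.mp (h.subset List.mem_cons_self) with hxA | hxB
  · obtain ⟨a, A', rfl⟩ := List.exists_cons_of_ne_nil (List.ne_nil_of_mem hxA)
    obtain rfl := head_eq hA hxA (h.symm.subset (List.mem_append_left _ List.mem_cons_self))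
    exact .inl ⟨A', rfl, h.cons_inv⟩
  · obtain ⟨b, B', rfl⟩ := List.exists_cons_of_ne_nil (List.ne_nil_of_mem hxB)
    obtain rfl := head_eq hB hxB (h.symm.subset (List.mem_append_right _ List.mem_cons_self))
    exact .inr ⟨B', rfl, (h.trans List.perm_middle).cons_inv⟩

namespace FlatLayout

theorem modeLE_trans {p q r : ℕ × ℕ} (hpq : ModeLE p q) (hqr : ModeLE q r) : ModeLE p r := by
  unfold ModeLE at *; omega

instance : Trans ModeLE ModeLE ModeLE := ⟨modeLE_trans⟩

instance : Std.Antisymm ModeLE :=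
  ⟨fun p q hpq hqp => by unfold ModeLE at *; ext <;> omega⟩

theorem pairwise_sortL (L : FlatLayout) : (sortL L).Pairwise ModeLE := by
  simpa [sortL] using List.pairwise_mergeSort (le := fun p q => decide (ModeLE p q))
    (fun _ _ _ hpq hqr => by simp only [decide_eq_true_eq] at *; exact modeLE_trans hpq hqr)
    (fun p q => by simp only [Bool.or_eq_true, decide_eq_true_eq]; unfold ModeLE; omega) L

theorem sortL_perm (L : FlatLayout) : (sortL L).Perm L := List.mergeSort_perm _ _

theorem squeeze_append (L L' : FlatLayout) : squeeze (L ++ L') = squeeze L ++ squeeze L' :=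
  List.filter_append ..

theorem size_cons (s d : ℕ) (t : FlatLayout) : size ((s, d) :: t) = s * size t := by
  simp [size]

theorem size_pos {L : FlatLayout} (hL : ∀ p ∈ L, 0 < p.1) : 0 < size L :=
  List.prod_pos fun _ hx => by
    obtain ⟨p, hp, rfl⟩ := List.mem_map.mp hx
    exact hL p hp

def offsets (L : FlatLayout) : Finset ℕ :=
  (L.map fun p => (Finset.range p.1).image (· * p.2)).sum

theorem image_phi_cons (s d : ℕ) (t : FlatLayout) :
    (Finset.range (size ((s, d) :: t))).image (phi ((s, d) :: t)) =
      (Finset.range s).image (· * d) + (Finset.range (size t)).image (phi t) := by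
  ext n
  simp only [size_cons, Finset.mem_image, Finset.mem_range, Finset.mem_add, phi]
  constructor
  · rintro ⟨x, hx, rfl⟩
    have hs : 0 < s := Nat.pos_of_mul_pos_right (Nat.zero_lt_of_lt hx)
    exact ⟨_, ⟨x % s, Nat.mod_lt x hs, rfl⟩, _, ⟨x / s, Nat.div_lt_of_lt_mul hx, rfl⟩, rfl⟩
  · rintro ⟨_, ⟨a, ha, rfl⟩, _, ⟨y, hy, rfl⟩, rfl⟩
    refine ⟨a + s * y, ?_, ?_⟩
    · calc a + s * y < s * (y + 1) := by rw [Nat.mul_succ]; omega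
        _ ≤ s * size t := Nat.mul_le_mul_left s hy
    · have hs : 0 < s := Nat.zero_lt_of_lt ha
      rw [Nat.add_mul_mod_self_left, Nat.mod_eq_of_lt ha, Nat.add_mul_div_left _ _ hs,
        Nat.div_eq_of_lt ha, zero_add]

theorem image_phi (L : FlatLayout) :
    (Finset.range (size L)).image (phi L) = offsets L := by
  induction L with
  | nil => rfl
  | cons p t ih =>
    obtain ⟨s, d⟩ := p
    rw [image_phi_cons, ih]
    simp [offsets]

theorem compact_iff_offsets {L : FlatLayout} :
    Compact L ↔ offsets L = Finset.range (cosize L) ∧ size L = cosize L := by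
  have hset (n : ℕ) : {x | x < n} = (Finset.range n : Set ℕ) := by ext; simp
  rw [Compact, hset, hset, ← image_phi]
  constructor
  · intro h
    have himage : (Finset.range (size L)).image (phi L) = Finset.range (cosize L) := by
      rw [← Finset.coe_inj, Finset.coe_image, h.image_eq]
    refine ⟨himage, ?_⟩
    simpa [himage] using (Finset.card_image_iff.mpr h.injOn).symm
  · rintro ⟨himage, hsize⟩
    have hinj : Set.InjOn (phi L) (Finset.range (size L)) := by
      rw [← Finset.card_image_iff, himage, hsize]
    have hbij := hinj.bijOn_image
    rwa [← Finset.coe_image, himage] at hbij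

theorem Compact.size_eq_cosize {L : FlatLayout} (h : Compact L) : size L = cosize L :=
  (compact_iff_offsets.mp h).2

theorem Compact.pos_of_mem {L : FlatLayout} (h : Compact L) {p : ℕ × ℕ} (hp : p ∈ L) :
    0 < p.1 := by
  have hsize : size L ≠ 0 := by rw [h.size_eq_cosize, cosize]; omega
  rw [size, Ne, List.prod_eq_zero_iff] at hsize
  exact Nat.pos_of_ne_zero fun h0 => hsize (List.mem_map.mpr ⟨p, hp, h0⟩)

theorem size_eq_of_perm {L L' : FlatLayout} (h : L.Perm L') : size L = size L' :=
  (h.map _).prod_eq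

theorem compact_iff_of_perm {L L' : FlatLayout} (h : L.Perm L') : Compact L ↔ Compact L' := by
  have hoffsets : offsets L = offsets L' := (h.map _).sum_eq
  have hcosize : cosize L = cosize L' := by rw [cosize, cosize, (h.map _).sum_eq]
  rw [compact_iff_offsets, compact_iff_offsets, hoffsets, size_eq_of_perm h, hcosize]

@[to_additive]
theorem prod_map_squeeze {M : Type*} [CommMonoid M] (f : ℕ × ℕ → M) (hf : ∀ d, f (1, d) = 1)
    (L : FlatLayout) : ((squeeze L).map f).prod = (L.map f).prod := by
  induction L with
  | nil => rfl
  | cons p t ih =>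
    obtain ⟨s, d⟩ := p
    simp only [squeeze] at ih ⊢
    by_cases hs : s = 1
    · simp [hs, hf, ih]
    · simp [hs, ih]

theorem size_squeeze (L : FlatLayout) : size (squeeze L) = size L :=
  prod_map_squeeze _ (fun _ => rfl) L

theorem compact_squeeze_iff {L : FlatLayout} : Compact (squeeze L) ↔ Compact L := by
  have hoffsets : offsets (squeeze L) = offsets L := sum_map_squeeze _ (fun _ => by simp [Finset.singleton_zero]) L
  have hcosize : cosize (squeeze L) = cosize L := by
    rw [cosize, cosize, sum_map_squeeze _ (fun d => by simp) L]
  rw [compact_iff_offsets, compact_iff_offsets, hoffsets, size_squeeze, hcosize]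

theorem compact_congr {L L' : FlatLayout} (hphi : ∀ x, phi L x = phi L' x)
    (hsize : size L = size L') (hcosize : cosize L = cosize L') : Compact L ↔ Compact L' := by
  rw [Compact, Compact, funext hphi, hsize, hcosize]

theorem compact_cons_cons_mul_iff {s s' d : ℕ} (hs' : 0 < s') (M : FlatLayout) :
    Compact ((s, d) :: (s', s * d) :: M) ↔ Compact ((s * s', d) :: M) := by
  refine compact_congr (fun x => ?_) ?_ ?_
  · simp only [phi]
    rw [Nat.mod_mul, ← Nat.div_div_eq_div_mul]
    ring
  · simp only [size_cons, mul_assoc]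
  · have hmul : (s * s' - 1) * d = (s - 1) * d + (s' - 1) * (s * d) := by
      obtain ⟨k, rfl⟩ := Nat.exists_eq_add_one_of_ne_zero hs'.ne'
      rcases s with _ | s
      · simp
      · have : (s + 1) * (k + 1) - 1 = s * k + s + k := by ring_nf; omega
        rw [this, Nat.add_sub_cancel, Nat.add_sub_cancel]
        ring
    simp only [cosize, List.map_cons, List.sum_cons, hmul, add_assoc]

theorem phi_zero (L : FlatLayout) : phi L 0 = 0 := by
  induction L with
  | nil => rfl
  | cons p t ih => simp [phi, ih]

theorem phi_eq_zero_or_le {c : ℕ} {L : FlatLayout} (hL : ∀ p ∈ L, c ≤ p.2) (x : ℕ) :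
    phi L x = 0 ∨ c ≤ phi L x := by
  induction L generalizing x with
  | nil => exact .inl rfl
  | cons p t ih =>
    obtain ⟨s, d⟩ := p
    have hd : c ≤ d := hL _ List.mem_cons_self
    rcases ih (fun p hp => hL p (List.mem_cons_of_mem _ hp)) (x / s) with h | h
    · rcases Nat.eq_zero_or_pos (x % s) with h0 | h0
      · exact .inl (by simp [phi, h0, h])
      · exact .inr (by simp only [phi]; nlinarith)
    · exact .inr (by simp only [phi]; omega)

def IsTelescopic : FlatLayout → ℕ → Prop
  | [], _ => True
  | (s, d) :: t, r => d = r ∧ IsTelescopic t (s * r)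

theorem stride_eq_of_compact {P s d : ℕ} {t : FlatLayout} (hP : 0 < P) (hs : 2 ≤ s)
    (ht : 0 < size t) (hd : ∀ q ∈ t, d ≤ q.2) (hC : Compact ((P, 1) :: (s, d) :: t)) :
    d = P := by
  have hsize : P * s ≤ size ((P, 1) :: (s, d) :: t) := by
    rw [size_cons, size_cons, ← mul_assoc]; exact Nat.le_mul_of_pos_right _ ht
  rcases lt_trichotomy d P with hlt | heq | hgt
  · -- the indices `d` and `P` both have offset `d`
    have hphi_d : phi ((P, 1) :: (s, d) :: t) d = d := by
      simp [phi, Nat.mod_eq_of_lt hlt, Nat.div_eq_of_lt hlt, phi_zero]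
    have hphi_P : phi ((P, 1) :: (s, d) :: t) P = d := by
      simp [phi, Nat.div_self hP, Nat.mod_eq_of_lt (show 1 < s by omega),
        Nat.div_eq_of_lt (show 1 < s by omega), phi_zero]
    have hmem (x : ℕ) (hx : x ≤ P) : x ∈ {y | y < size ((P, 1) :: (s, d) :: t)} := by
      simp only [Set.mem_ofPred_eq]; nlinarith
    exact absurd (hC.injOn (hmem d hlt.le) (hmem P le_rfl) (hphi_d.trans hphi_P.symm)) hlt.ne
  · exact heq
  · -- the offset `P` is not attained
    obtain ⟨x, hx, hxP⟩ := hC.surjOn (show P ∈ {y | y < cosize _} by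
      rw [Set.mem_ofPred_eq, ← hC.size_eq_cosize]; nlinarith)
    have hmod : x % P < P := Nat.mod_lt x hP
    have hlow : ∀ q ∈ (s, d) :: t, d ≤ q.2 := by
      simpa using hd
    simp only [phi, Nat.mul_one] at hxP
    rcases phi_eq_zero_or_le hlow (x / P) with h | h <;> simp only [phi] at h <;> omega

theorem isTelescopic_of_compact_cons {P : ℕ} (hP : 0 < P) {M : FlatLayout}
    (hsorted : M.Pairwise ModeLE) (hshape : ∀ p ∈ M, 2 ≤ p.1) (hC : Compact ((P, 1) :: M)) :
    IsTelescopic M P := by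
  induction M generalizing P with
  | nil => trivial
  | cons p t ih =>
    obtain ⟨s, d⟩ := p
    have hs : 2 ≤ s := hshape _ List.mem_cons_self
    have htshape : ∀ q ∈ t, 2 ≤ q.1 := fun q hq => hshape q (List.mem_cons_of_mem _ hq)
    have hd : ∀ q ∈ t, d ≤ q.2 := fun q hq => by
      have := List.rel_of_pairwise_cons hsorted hq
      unfold ModeLE at this; omega
    obtain rfl := stride_eq_of_compact hP hs (size_pos fun q hq => by linarith [htshape q hq])
      hd hC
    have hmerged : Compact ((d * s, 1) :: t) :=
      (compact_cons_cons_mul_iff (d := 1) (by omega) t).mp (by rwa [mul_one])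
    exact ⟨rfl, ih (by positivity) hsorted.of_cons htshape (by rwa [mul_comm])⟩

theorem isTelescopic_one_of_compact {M : FlatLayout} (hsorted : M.Pairwise ModeLE)
    (hshape : ∀ p ∈ M, 2 ≤ p.1) (hC : Compact M) : IsTelescopic M 1 := by
  refine isTelescopic_of_compact_cons one_pos hsorted hshape ?_
  rw [← compact_squeeze_iff] at hC ⊢
  simpa [squeeze] using hC

/-- The modes of `C` in `comp(A, N)` from stride `r` on: `(d / r, r)` fills the gap between the
stride `r` reached so far and the next stride `d` of `l` (and `N / r` the last gap). -/
def gapModes : FlatLayout → ℕ → ℕ → FlatLayout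
  | [], r, N => [(N / r, r)]
  | (s, d) :: t, r, N => (d / r, r) :: gapModes t (s * d) N

theorem gapModes_mul (N : ℕ) (p : ℕ × ℕ) (t : FlatLayout) :
    gapModes t (p.1 * p.2) N =
      ((p :: t).zip t).map (fun pq => (pq.2.2 / (pq.1.1 * pq.1.2), pq.1.1 * pq.1.2)) ++
        [(N / (((p :: t).getLast (List.cons_ne_nil _ _)).1 *
            ((p :: t).getLast (List.cons_ne_nil _ _)).2),
          ((p :: t).getLast (List.cons_ne_nil _ _)).1 *
            ((p :: t).getLast (List.cons_ne_nil _ _)).2)] := by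
  induction t generalizing p with
  | nil => rfl
  | cons q t ih =>
    simp [gapModes, ih q]

theorem compNModes_eq_gapModes (l : FlatLayout) (N : ℕ) : compNModes l N = gapModes l 1 N := by
  cases l with
  | nil => simp [compNModes, gapModes]
  | cons p t =>
    simp [compNModes, compModes, gapModes, List.getLast?_eq_some_getLast, gapModes_mul N p t]

theorem eq_nil_or_exists_cons_of_perm {σ r : ℕ} {M A B : FlatLayout}
    (htel : IsTelescopic M (σ * r)) (hM : M.Pairwise ModeLE) (hA : A.Pairwise ModeLE)
    (hB : B.Pairwise ModeLE) (hcoal : ((σ, r) :: B).IsChain fun p q => p.1 * p.2 ≠ q.2)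
    (hperm : M.Perm (A ++ B)) : M = [] ∨ ∃ s A', A = (s, σ * r) :: A' := by
  cases M with
  | nil => exact .inl rfl
  | cons m M =>
    obtain ⟨τ, e⟩ := m
    obtain ⟨rfl, -⟩ := htel
    rcases List.head_cases_of_perm_append hM hA hB hperm with ⟨A', rfl, -⟩ | ⟨B', rfl, -⟩
    · exact .inr ⟨τ, A', rfl⟩
    · exact absurd rfl (List.isChain_cons_cons.mp hcoal).1

theorem eq_squeeze_gapModes_of_perm {M : FlatLayout} {r : ℕ} {A B : FlatLayout} (hr : 0 < r)
    (htel : IsTelescopic M r) (hM : M.Pairwise ModeLE) (hshape : ∀ p ∈ M, 2 ≤ p.1)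
    (hA : A.Pairwise ModeLE) (hB : B.Pairwise ModeLE)
    (hcoal : B.IsChain fun p q => p.1 * p.2 ≠ q.2) (hperm : M.Perm (A ++ B)) :
    B = squeeze (gapModes A r (r * size M)) := by
  induction M generalizing r A B with
  | nil =>
    obtain ⟨rfl, rfl⟩ := List.append_eq_nil_iff.mp hperm.symm.eq_nil
    simp [gapModes, size, squeeze, Nat.div_self hr]
  | cons m M ih =>
    obtain ⟨σ, e⟩ := m
    obtain ⟨rfl, htel⟩ := htel
    have hσ : 2 ≤ σ := hshape _ List.mem_cons_self
    have hσr : 0 < σ * e := by positivity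
    have hN : e * size ((σ, e) :: M) = σ * e * size M := by rw [size_cons]; ring
    have ih' {A B : FlatLayout} := ih hσr htel hM.of_cons
      (fun p hp => hshape p (List.mem_cons_of_mem _ hp)) (A := A) (B := B)
    rw [hN]
    rcases List.head_cases_of_perm_append hM hA hB hperm with ⟨A, rfl, hrest⟩ | ⟨B, rfl, hrest⟩
    · rw [ih' hA.of_cons hB hcoal hrest]
      simp [gapModes, squeeze, Nat.div_self hr]
    · rcases eq_nil_or_exists_cons_of_perm htel hM.of_cons hA hB.of_cons hcoal hrest with
        rfl | ⟨s, A, rfl⟩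
      · obtain ⟨rfl, rfl⟩ := List.append_eq_nil_iff.mp hrest.symm.eq_nil
        simp [gapModes, squeeze, size, Nat.mul_div_cancel _ hr, show σ ≠ 1 by omega]
      · rw [ih' hA hB.of_cons hcoal.tail hrest]
        simp [gapModes, squeeze, Nat.div_self hσr, Nat.mul_div_cancel _ hr, show σ ≠ 1 by omega]

theorem coalAux_eq_self {L : FlatLayout} (h : L.IsChain fun p q => p.1 * p.2 ≠ q.2) :
    coalAux L = L := by
  induction L with
  | nil => rfl
  | cons p t ih =>
    cases t with
    | nil => rfl
    | cons q t =>
      obtain ⟨hpq, ht⟩ := List.isChain_cons_cons.mp h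
      simp only [coalAux] at ih ⊢
      rw [ih ht]
      simp [hpq]

end FlatLayout

open FlatLayout in
theorem NComplement_unique_general (A B : FlatLayout) (N : ℕ) (h1 : IsNComplement A B N)
    (h2 : Coalesced B) (h3 : Sorted B) :
    B = compN A N := by
  obtain ⟨hperp, hsize⟩ := h1
  have hsqueezeB : squeeze B = B := List.filter_eq_self.mpr fun p hp => by simpa using h2.1 p hp
  set M := sortL (squeeze (A ++ B))
  have hperm : M.Perm (sortL (squeeze A) ++ B) := by
    refine (sortL_perm _).trans ?_
    rw [squeeze_append, hsqueezeB]
    exact (sortL_perm _).symm.append_right B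
  have hC : Compact M := (compact_iff_of_perm (sortL_perm _)).mpr (compact_squeeze_iff.mpr hperp)
  have hshape : ∀ p ∈ M, 2 ≤ p.1 := fun p hp => by
    have hne : p.1 ≠ 1 := by simpa using (List.mem_filter.mp ((sortL_perm _).subset hp)).2
    have := hC.pos_of_mem hp
    omega
  have hsizeM : size M = N := by
    rw [size_eq_of_perm (sortL_perm _), size_squeeze, ← hsize]
    simp [size]
  have hB := eq_squeeze_gapModes_of_perm one_pos
    (isTelescopic_one_of_compact (pairwise_sortL _) hshape hC) (pairwise_sortL _) hshape
    (pairwise_sortL _) (List.isChain_iff_pairwise.mp h3) h2.2 hperm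
  rw [one_mul, hsizeM] at hB
  rw [compN, coal, compNModes_eq_gapModes, ← hB]
  exact (coalAux_eq_self h2.2).symm

open FlatLayout in
theorem NComplement_unique (A B : FlatLayout) (N : ℕ) (hN : 0 < N) (hA : A.Valid)
    (hc : NComplementable A N) (hB : B.Valid) (h1 : IsNComplement A B N)
    (h2 : Coalesced B) (h3 : Sorted B) :
    B = compN A N :=
  NComplement_unique_general A B N h1 h2 h3
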